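/- arXiv:1903.10691 — 3 statements merged into one kernel-verified Lean document; each statement's English description precedes it below -/
import Mathlib

section
/- Let λ, μ, γ, P > 0, 0 < u < 1, and A = (γP + μ + λu)/(2uμ). The smaller root q₋ = A − √(A² − λ/(uμ)) of the quadratic uμq² − 2uμAq + λ = 0 satisfies 0 < q₋ < 1 if and only if γP > (λ − μ)(1 − u). -/
/-- The smaller root of the quadratic lies in (0,1) iff γP > (λ-μ)(1-u). -/
theorem smaller_root_in_unit_interval_iff (lam mu gam P u : ℝ)
    (hlam : 0 < lam) (hmu : 0 < mu) (hgam : 0 < gam) (hP : 0 < P)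
    (hu0 : 0 < u) (hu1 : u < 1) :
    (0 < (gam * P + mu + lam * u) / (2 * u * mu)
          - Real.sqrt (((gam * P + mu + lam * u) / (2 * u * mu)) ^ 2 - lam / (u * mu))
      ∧ (gam * P + mu + lam * u) / (2 * u * mu)
          - Real.sqrt (((gam * P + mu + lam * u) / (2 * u * mu)) ^ 2 - lam / (u * mu)) < 1)
    ↔ gam * P > (lam - mu) * (1 - u) := by
  have hum : (0:ℝ) < u * mu := mul_pos hu0 hmu
  set A := (gam * P + mu + lam * u) / (2 * u * mu) with hAdef
  have hAe : A * (2 * (u * mu)) = gam * P + mu + lam * u := by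
    have h2um : (2*u*mu) ≠ 0 := by positivity
    have he : (2:ℝ)*(u*mu) = 2*u*mu := by ring
    rw [hAdef, he, div_mul_cancel₀ _ h2um]
  have hApos : 0 < A := by
    rw [hAdef]
    apply div_pos
    · nlinarith [mul_pos hgam hP, mul_pos hlam hu0]
    · nlinarith
  have hdisc : 0 ≤ A ^ 2 - lam / (u * mu) := by
    rw [sub_nonneg, div_le_iff₀ hum]
    have h2 : (A * (2 * (u * mu))) ^ 2 = (gam * P + mu + lam * u) ^ 2 := by rw [hAe]
    nlinarith [sq_nonneg (mu - lam * u), mul_pos hgam hP,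
      mul_pos (mul_pos hgam hP) (mul_pos hgam hP),
      mul_pos (mul_pos hgam hP) (mul_pos hlam hu0),
      mul_pos (mul_pos hgam hP) hmu, hum]
  set s := Real.sqrt (A ^ 2 - lam / (u * mu)) with hsdef
  have hs0 : 0 ≤ s := Real.sqrt_nonneg _
  have hs2 : s ^ 2 = A ^ 2 - lam / (u * mu) := Real.sq_sqrt hdisc
  have hs2' : s ^ 2 * (u * mu) = A ^ 2 * (u * mu) - lam := by
    rw [hs2]; field_simp
  have hsA : 0 < A - s := by
    nlinarith [div_pos hlam hum, hs0, hs2, hApos]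
  constructor
  · rintro ⟨h1, h2⟩
    by_contra hcon
    push_neg at hcon
    -- hcon : gam * P ≤ (lam - mu) * (1 - u)
    have hf1 : 0 ≤ u * mu - A * (2 * (u * mu)) + lam := by
      rw [hAe]; nlinarith
    have hlm : mu < lam := by nlinarith [mul_pos hgam hP]
    have hA1 : 1 < A := by nlinarith
    have hkey : 0 < (s - (A - 1)) * (s + (A - 1)) :=
      mul_pos (by linarith) (by linarith)
    nlinarith [hs2', hf1, hs0, hum, hkey]
  · intro hgp
    refine ⟨hsA, ?_⟩
    by_contra hcon
    push_neg at hcon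
    -- hcon : 1 ≤ A - s
    have hf1 : u * mu - A * (2 * (u * mu)) + lam < 0 := by
      rw [hAe]; nlinarith
    have hkey : 0 ≤ (A - 1 - s) * (A - 1 + s) :=
      mul_nonneg (by linarith) (by linarith)
    nlinarith [hs2', hs0, hum, hkey, hf1]
end

section
/- Under the conditions of the Lagrangian optimization with constraint ΣᵢPᵢ = 1, the unique candidate solution is Pᵢ* = (√(λᵢμᵢ)/γ)·[(γ + Σⱼ(μⱼ + λⱼu))/(Σⱼ√(λⱼμⱼ))] − (μᵢ + λᵢu)/γ for each i = 1..N. -/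
/-! Stationarity says `Aᵢ / √(Aᵢ² - Xᵢ) = B` with `Xᵢ = λᵢ/(μᵢu)` and `B` independent of `i`;
solving gives `Aᵢ = B √(Xᵢ/(B² - 1))`, hence `γPᵢ = C √(λᵢμᵢ) - (μᵢ + λᵢu)` for one constant `C`.
Summing over `i` and using `∑ Pᵢ = 1` determines `C`. -/

open Finset Real

theorem div_sqrt_eq_of_stationary {a γ u μ β r : ℝ} (ha : a ≠ 0) (hγ : γ ≠ 0) (hu : u ≠ 0)
    (hμ : μ ≠ 0) (h : -a * μ * (γ / (2 * μ * u)) * (1 - r) + β = 0) :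
    r = 1 - 2 * u * β / (a * γ) := by
  field_simp at h ⊢
  linear_combination h

theorem eq_mul_sqrt_div_of_eq_mul_sqrt {A X B : ℝ} (hB : 1 < B ^ 2) (hXA : X ≤ A ^ 2)
    (h : A = B * √(A ^ 2 - X)) : A = B * √(X / (B ^ 2 - 1)) := by
  set s := √(A ^ 2 - X)
  have hs_sq : s ^ 2 = A ^ 2 - X := sq_sqrt (sub_nonneg.mpr hXA)
  have hs_sq' : s ^ 2 = X / (B ^ 2 - 1) := by
    rw [eq_div_iff (by linarith)]
    linear_combination -hs_sq - (A + B * s) * h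
  rw [← hs_sq', sqrt_sq (sqrt_nonneg _), ← h]

theorem mul_sqrt_div_eq_sqrt_mul {l m u c : ℝ} (hl : 0 < l) (hm : 0 < m) (hu : 0 < u) :
    u * m * √(l / (m * u) / c) = √(l * m) * √(u / c) := by
  rw [← sqrt_mul (by positivity), ← sqrt_sq (by positivity : 0 ≤ u * m), ← sqrt_mul (sq_nonneg _)]
  congr 1
  field_simp

theorem mul_eq_of_div_sqrt_eq {γ p l m u A B : ℝ} (hl : 0 < l) (hm : 0 < m) (hu : 0 < u)
    (hB : 1 < B ^ 2) (hA : A = (γ * p + m + l * u) / (2 * u * m)) (hdisc : l / (m * u) < A ^ 2)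
    (hstat : A / √(A ^ 2 - l / (m * u)) = B) :
    γ * p = 2 * B * √(u / (B ^ 2 - 1)) * √(l * m) - (m + l * u) := by
  have hD : √(A ^ 2 - l / (m * u)) ≠ 0 := (sqrt_pos.mpr (sub_pos.mpr hdisc)).ne'
  have hAB := eq_mul_sqrt_div_of_eq_mul_sqrt hB hdisc.le ((div_eq_iff hD).mp hstat)
  have hp : γ * p = 2 * (u * m * A) - (m + l * u) := by
    rw [hA]
    field_simp
    ring
  rw [hp, hAB]
  linear_combination 2 * B * mul_sqrt_div_eq_sqrt_mul (c := B ^ 2 - 1) hl hm hu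

theorem eq_mul_div_sum_sub_of_sum_eq_one {ι : Type*} [Fintype ι] {P w c : ι → ℝ} {γ C : ℝ}
    (hγ : γ ≠ 0) (hw : ∑ j, w j ≠ 0) (h : ∀ i, γ * P i = C * w i - c i) (hP : ∑ i, P i = 1)
    (i : ι) : P i = w i / γ * ((γ + ∑ j, c j) / ∑ j, w j) - c i / γ := by
  have hC : C = (γ + ∑ j, c j) / ∑ j, w j := by
    have hsum : γ = C * ∑ j, w j - ∑ j, c j := by
      rw [← mul_one γ, ← hP, mul_sum, mul_sum, ← sum_sub_distrib]
      exact sum_congr rfl fun i _ => h i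
    rw [eq_div_iff hw]
    linarith
  rw [← hC]
  field_simp
  linear_combination h i

theorem optimal_allocation_general (N : ℕ) (hN : 1 ≤ N)
    (lam mu P : Fin N → ℝ) (u gam a β : ℝ)
    (hlam : ∀ i, 0 < lam i) (hmu : ∀ i, 0 < mu i)
    (hu0 : 0 < u) (hgam : 0 < gam) (ha : a < 0)
    (A : Fin N → ℝ) (hA : ∀ i, A i = (gam * P i + mu i + lam i * u) / (2 * u * mu i))
    (hdisc : ∀ i, (A i) ^ 2 > lam i / (mu i * u))
    (hB : (1 - 2 * u * β / (a * gam)) ^ 2 > 1)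
    (hstat : ∀ i, -a * mu i * (gam / (2 * mu i * u))
        * (1 - A i / Real.sqrt ((A i) ^ 2 - lam i / (mu i * u))) + β = 0)
    (hsum : ∑ i, P i = 1) :
    ∀ i, P i = Real.sqrt (lam i * mu i) / gam
          * ((gam + ∑ j, (mu j + lam j * u)) / (∑ j, Real.sqrt (lam j * mu j)))
        - (mu i + lam i * u) / gam := by
  have : Nonempty (Fin N) := ⟨⟨0, hN⟩⟩
  have hS : ∑ j, √(lam j * mu j) ≠ 0 :=
    (sum_pos (fun j _ => sqrt_pos.mpr (mul_pos (hlam j) (hmu j))) univ_nonempty).ne'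
  have hP := fun i ↦
    mul_eq_of_div_sqrt_eq (hlam i) (hmu i) hu0 hB (hA i) (hdisc i)
      (div_sqrt_eq_of_stationary ha.ne hgam.ne' hu0.ne' (hmu i).ne' (hstat i))
  exact eq_mul_div_sum_sub_of_sum_eq_one (c := fun j => mu j + lam j * u) hgam.ne' hS hP hsum

/-- Under the Lagrangian stationarity conditions and the constraint Σᵢ Pᵢ = 1,
the unique candidate solution is the stated Pᵢ*. -/
theorem optimal_allocation (N : ℕ) (hN : 1 ≤ N)
    (lam mu P : Fin N → ℝ) (u gam a β : ℝ)
    (hlam : ∀ i, 0 < lam i) (hmu : ∀ i, 0 < mu i)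
    (hu0 : 0 < u) (hu1 : u < 1) (hgam : 0 < gam) (ha : a < 0)
    (A : Fin N → ℝ) (hA : ∀ i, A i = (gam * P i + mu i + lam i * u) / (2 * u * mu i))
    (hdisc : ∀ i, (A i) ^ 2 > lam i / (mu i * u))
    (hB : (1 - 2 * u * β / (a * gam)) ^ 2 > 1)
    (hstat : ∀ i, -a * mu i * (gam / (2 * mu i * u))
        * (1 - A i / Real.sqrt ((A i) ^ 2 - lam i / (mu i * u))) + β = 0)
    (hsum : ∑ i, P i = 1) :
    ∀ i, P i = Real.sqrt (lam i * mu i) / gam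
          * ((gam + ∑ j, (mu j + lam j * u)) / (∑ j, Real.sqrt (lam j * mu j)))
        - (mu i + lam i * u) / gam :=
  optimal_allocation_general N hN lam mu P u gam a β hlam hmu hu0 hgam ha A hA hdisc hB hstat hsum
end

section
/- The second derivative of the cost C(P) = c₀ + a·Σᵢ(λᵢ − qᵢ(Pᵢ)μᵢ) with respect to Pᵢ equals −aγ²λᵢ/(4μᵢ²u³(Aᵢ² − λᵢ/(μᵢu))^{3/2}), which is strictly positive when a < 0 and Aᵢ² > λᵢ/(μᵢu); hence the Hessian of C (a diagonal matrix) is positive definite. -/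
/-!
Write `c = λ/(μu)`. Then `Aᵢ` is affine in `Pᵢ` with slope `k = γ/(2uμ)`, and the cost term is
affine in `r(Aᵢ)` where `r(x) = x - √(x² - c)`, so its second derivative is `-aμk² r''(Aᵢ)`.
Since `(x/√(x² - c))' = -c/(x² - c)^{3/2}`, one gets `r''(x) = c/(x² - c)^{3/2} > 0`.
-/

open Real

section AffineReparam

variable {𝕜 F : Type*} [NontriviallyNormedField 𝕜] [NormedAddCommGroup F] [NormedSpace 𝕜 F]

theorem deriv_comp_mul_add (f : 𝕜 → F) (k b x : 𝕜) :
    deriv (fun t => f (k * t + b)) x = k • deriv f (k * x + b) := by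
  rw [deriv_comp_mul_left k (fun y => f (y + b)) x, deriv_comp_add_const]

theorem deriv_deriv_comp_mul_add (f : 𝕜 → F) (k b x : 𝕜) :
    deriv (deriv fun t => f (k * t + b)) x = k ^ 2 • deriv (deriv f) (k * x + b) := by
  have h : deriv (fun t => f (k * t + b)) = fun t => k • deriv f (k * t + b) :=
    funext (deriv_comp_mul_add f k b)
  rw [h, deriv_fun_const_smul_field, deriv_comp_mul_add, smul_smul, sq]

end AffineReparam

theorem hasDerivAt_sqrt_sq_sub {c x : ℝ} (hx : c < x ^ 2) :
    HasDerivAt (fun y => √(y ^ 2 - c)) (x / √(x ^ 2 - c)) x := by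
  have hpos : 0 < x ^ 2 - c := sub_pos.mpr hx
  convert ((hasDerivAt_pow 2 x).sub_const c).sqrt hpos.ne' using 1
  field_simp
  ring

theorem hasDerivAt_div_sqrt_sq_sub {c x : ℝ} (hx : c < x ^ 2) :
    HasDerivAt (fun y => y / √(y ^ 2 - c)) (-c / √(x ^ 2 - c) ^ 3) x := by
  have hpos : 0 < x ^ 2 - c := sub_pos.mpr hx
  have hS : 0 < √(x ^ 2 - c) := sqrt_pos.mpr hpos
  refine ((hasDerivAt_id' x).fun_div (hasDerivAt_sqrt_sq_sub hx) hS.ne').congr_deriv ?_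
  have hS2 : √(x ^ 2 - c) ^ 2 = x ^ 2 - c := sq_sqrt hpos.le
  field_simp
  linear_combination hS2

theorem deriv_sub_sqrt_sq_sub {c x : ℝ} (hx : c < x ^ 2) :
    deriv (fun y => y - √(y ^ 2 - c)) x = 1 - x / √(x ^ 2 - c) :=
  ((hasDerivAt_id x).sub (hasDerivAt_sqrt_sq_sub hx)).deriv

theorem deriv_deriv_sub_sqrt_sq_sub {c x : ℝ} (hx : c < x ^ 2) :
    deriv (deriv fun y => y - √(y ^ 2 - c)) x = c / (x ^ 2 - c) ^ (3 / 2 : ℝ) := by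
  have hopen : IsOpen {y : ℝ | c < y ^ 2} := isOpen_lt continuous_const (continuous_pow 2)
  have hderiv : deriv (fun y => y - √(y ^ 2 - c)) =ᶠ[nhds x] fun y => 1 - y / √(y ^ 2 - c) :=
    Filter.eventually_of_mem (hopen.mem_nhds hx) fun y hy => deriv_sub_sqrt_sq_sub hy
  rw [hderiv.deriv_eq, ((hasDerivAt_div_sqrt_sq_sub hx).const_sub 1).deriv,
    rpow_div_two_eq_sqrt 3 (sub_pos.mpr hx).le]
  norm_cast
  ring

theorem cost_second_derivative_general (lam mu gam u a P : ℝ)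
    (hlam : 0 < lam) (hmu : 0 < mu) (hgam : 0 < gam)
    (hu0 : 0 < u) (ha : a < 0) (hP : 0 < P)
    (A : ℝ → ℝ) (hA : ∀ t, A t = (gam * t + mu + lam * u) / (2 * u * mu))
    (hdisc : ∀ t, 0 < t → (A t) ^ 2 > lam / (mu * u)) :
    deriv (deriv (fun t => a * (lam - (A t - Real.sqrt ((A t) ^ 2 - lam / (mu * u))) * mu))) P
      = -a * gam ^ 2 * lam / (4 * mu ^ 2 * u ^ 3 * ((A P) ^ 2 - lam / (mu * u)) ^ ((3:ℝ)/2))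
    ∧ 0 < -a * gam ^ 2 * lam / (4 * mu ^ 2 * u ^ 3 * ((A P) ^ 2 - lam / (mu * u)) ^ ((3:ℝ)/2)) := by
  set c := lam / (mu * u)
  set k := gam / (2 * u * mu)
  set b := (mu + lam * u) / (2 * u * mu)
  have hA_affine : ∀ t, A t = k * t + b := fun t => by rw [hA]; ring
  have hdiscP : c < A P ^ 2 := hdisc P hP
  have hcost : (fun t => a * (lam - (A t - √(A t ^ 2 - c)) * mu))
      = fun t => a * lam + (-a * mu) * (fun y => y - √(y ^ 2 - c)) (k * t + b) := by
    funext t; rw [hA_affine]; ring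
  have hpow_pos : 0 < (A P ^ 2 - c) ^ (3 / 2 : ℝ) := rpow_pos_of_pos (sub_pos.mpr hdiscP) _
  refine ⟨?_, div_pos (mul_pos (mul_pos (neg_pos.mpr ha) (pow_pos hgam 2)) hlam) (by positivity)⟩
  rw [hcost, deriv_const_add', deriv_const_mul_field', deriv_const_mul_field,
    deriv_deriv_comp_mul_add (fun y => y - √(y ^ 2 - c)), ← hA_affine,
    deriv_deriv_sub_sqrt_sq_sub hdiscP, smul_eq_mul]
  simp only [k, c]
  field_simp
  ring

/-- The second derivative of the i-th term of the cost with respect to Pᵢ equals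
-aγ²λᵢ/(4μᵢ²u³(Aᵢ²-λᵢ/(μᵢu))^{3/2}) and is strictly positive; hence the Hessian of C,
a diagonal matrix with these entries, is positive definite. -/
theorem cost_second_derivative (lam mu gam u a P : ℝ)
    (hlam : 0 < lam) (hmu : 0 < mu) (hgam : 0 < gam)
    (hu0 : 0 < u) (hu1 : u < 1) (ha : a < 0) (hP : 0 < P)
    (A : ℝ → ℝ) (hA : ∀ t, A t = (gam * t + mu + lam * u) / (2 * u * mu))
    (hdisc : ∀ t, 0 < t → (A t) ^ 2 > lam / (mu * u)) :
    deriv (deriv (fun t => a * (lam - (A t - Real.sqrt ((A t) ^ 2 - lam / (mu * u))) * mu))) P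
      = -a * gam ^ 2 * lam / (4 * mu ^ 2 * u ^ 3 * ((A P) ^ 2 - lam / (mu * u)) ^ ((3:ℝ)/2))
    ∧ 0 < -a * gam ^ 2 * lam / (4 * mu ^ 2 * u ^ 3 * ((A P) ^ 2 - lam / (mu * u)) ^ ((3:ℝ)/2)) :=
  cost_second_derivative_general lam mu gam u a P hlam hmu hgam hu0 ha hP A hA hdisc
end
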